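/- Let H be a finite group, U, V finite-dimensional orthogonal H-representations, and ε a one-dimensional orthogonal H-representation. The map sending a pair (f, v), where f : U → V is a linear isometric embedding and v ∈ ε ⊗ (im f)^⊥ is a vector of the twisted orthogonal complement, to the linear isometric embedding U ⊕ ε → V restricting to f on U and corresponding to v on ε (via the isomorphism ε ⊗ V ≅ Hom(ε, V), rescaled to be an isometry on the unit sphere), defines an H-equivariant homeomorphism between the unit sphere bundle Sγ_{H,ε}(U,V) and the space of linear isometric embeddings Mor_H(U ⊕ ε, V). -/

import Mathlib

/-!
A pair `(f, g)` of maps `U → V`, `E → V` is the same thing as one map `U ⊕ E → V`, and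
this correspondence `(f, g) ↦ f ∘ fst + g ∘ snd` is a continuous linear equivalence. On the
orthogonal sum, `‖f u + g e‖² = ‖f u‖² + ‖g e‖² + 2⟪f u, g e⟫` while `‖(u, e)‖² = ‖u‖² + ‖e‖²`,
so the combined map is an isometry exactly when `f` and `g` are isometries with orthogonal
images. Hence the equivalence restricts to a homeomorphism of the two subspaces, and
equivariance is just linearity of `ρV h`.
-/

/-- The unit sphere bundle `Sγ_{H,ε}(U,V)`: pairs of a linear isometric embedding
`f : U → V` together with a unit vector of `ε ⊗ (im f)^⊥`, encoded (via
`ε ⊗ V ≅ Hom(ε,V)`) as a linear isometric map `E → V` whose image is orthogonal to the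
image of `f`.  Continuous linear maps are used so that the total space carries its
natural topology. -/
abbrev SphereBundle (U E V : Type) [NormedAddCommGroup U] [InnerProductSpace ℝ U]
    [NormedAddCommGroup E] [InnerProductSpace ℝ E]
    [NormedAddCommGroup V] [InnerProductSpace ℝ V] : Type :=
  {p : (U →L[ℝ] V) × (E →L[ℝ] V) //
    Isometry p.1 ∧ Isometry p.2 ∧ ∀ (u : U) (e : E), @inner ℝ V _ (p.1 u) (p.2 e) = 0}

/-- The Stiefel space `Mor_H(U ⊕ ε, V)` of linear isometric embeddings `U ⊕ E → V`,
where `U ⊕ E` carries the orthogonal direct sum inner product. -/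
abbrev MorSum (U E V : Type) [NormedAddCommGroup U] [InnerProductSpace ℝ U]
    [NormedAddCommGroup E] [InnerProductSpace ℝ E]
    [NormedAddCommGroup V] [InnerProductSpace ℝ V] : Type :=
  {F : WithLp 2 (U × E) →L[ℝ] V // Isometry F}

open WithLp

section CoprodL2
variable {U E V : Type*} [NormedAddCommGroup U] [InnerProductSpace ℝ U]
    [NormedAddCommGroup E] [InnerProductSpace ℝ E]
    [NormedAddCommGroup V] [InnerProductSpace ℝ V]

noncomputable def coprodL2 : ((U →L[ℝ] V) × (E →L[ℝ] V)) ≃L[ℝ] (WithLp 2 (U × E) →L[ℝ] V) :=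
  (ContinuousLinearMap.coprodEquivL ℝ).trans
    ((WithLp.prodContinuousLinearEquiv 2 ℝ U E).symm.arrowCongr (.refl ℝ V))

@[simp]
lemma coprodL2_apply (p : (U →L[ℝ] V) × (E →L[ℝ] V)) (x : WithLp 2 (U × E)) :
    coprodL2 p x = p.1 x.fst + p.2 x.snd := rfl

lemma isometry_coprodL2_iff (f : U →L[ℝ] V) (g : E →L[ℝ] V) :
    Isometry (coprodL2 (f, g)) ↔
      Isometry f ∧ Isometry g ∧ ∀ u e, inner ℝ (f u) (g e) = 0 := by
  simp only [AddMonoidHomClass.isometry_iff_norm]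
  have hsq : ∀ u e, ‖f u + g e‖ ^ 2 = ‖f u‖ ^ 2 + ‖g e‖ ^ 2 + 2 * inner ℝ (f u) (g e) := by
    intro u e; rw [norm_add_sq_real]; ring
  constructor
  · intro h
    have hf : ∀ u, ‖f u‖ = ‖u‖ := fun u => by simpa using h (toLp 2 (u, 0))
    have hg : ∀ e, ‖g e‖ = ‖e‖ := fun e => by simpa using h (toLp 2 (0, e))
    refine ⟨hf, hg, fun u e => ?_⟩
    have hue := congrArg (· ^ 2) (h (toLp 2 (u, e)))
    simp only [coprodL2_apply, prod_norm_sq_eq_of_L2, hsq, hf, hg] at hue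
    simpa using hue
  · rintro ⟨hf, hg, horth⟩ x
    rw [← sq_eq_sq₀ (norm_nonneg _) (norm_nonneg _), coprodL2_apply, hsq, hf, hg, horth,
      prod_norm_sq_eq_of_L2]
    ring

end CoprodL2

theorem stmt1_general (H : Type) [Group H]
    (U E V : Type) [NormedAddCommGroup U] [InnerProductSpace ℝ U]
    [NormedAddCommGroup E] [InnerProductSpace ℝ E]
    [NormedAddCommGroup V] [InnerProductSpace ℝ V]
    (ρU : H →* (U ≃ₗᵢ[ℝ] U)) (ρE : H →* (E ≃ₗᵢ[ℝ] E)) (ρV : H →* (V ≃ₗᵢ[ℝ] V)) :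
    ∃ φ : SphereBundle U E V ≃ₜ MorSum U E V,
      (∀ (p : SphereBundle U E V) (u : U) (e : E),
        (φ p).1 ((WithLp.equiv 2 (U × E)).symm (u, e)) = p.1.1 u + p.1.2 e) ∧
      (∀ (h : H) (p q : SphereBundle U E V),
        (∀ u : U, q.1.1 u = ρV h (p.1.1 (ρU h⁻¹ u))) →
        (∀ e : E, q.1.2 e = ρV h (p.1.2 (ρE h⁻¹ e))) →
        ∀ (u : U) (e : E),
          (φ q).1 ((WithLp.equiv 2 (U × E)).symm (u, e)) =
            ρV h ((φ p).1 ((WithLp.equiv 2 (U × E)).symm (ρU h⁻¹ u, ρE h⁻¹ e)))) := by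
  refine ⟨coprodL2.toHomeomorph.subtype fun p => (isometry_coprodL2_iff p.1 p.2).symm,
    fun p u e => rfl, fun h p q hqU hqE u e => ?_⟩
  change q.1.1 u + q.1.2 e = ρV h (p.1.1 (ρU h⁻¹ u) + p.1.2 (ρE h⁻¹ e))
  rw [hqU, hqE, map_add]

/-- For finite-dimensional orthogonal `H`-representations `U`, `V` and a
one-dimensional orthogonal `H`-representation `ε` (here `E`), the map sending a pair
`(f, v)` (a linear isometric embedding `f : U → V` and a unit vector `v` of
`ε ⊗ (im f)^⊥`) to the linear isometric embedding `U ⊕ ε → V` restricting to `f` on `U`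
and corresponding to `v` on `ε` is an `H`-equivariant homeomorphism
`Sγ_{H,ε}(U,V) ≅ Mor_H(U ⊕ ε, V)`. -/
theorem stmt1 (H : Type) [Group H] [Finite H]
    (U E V : Type) [NormedAddCommGroup U] [InnerProductSpace ℝ U] [FiniteDimensional ℝ U]
    [NormedAddCommGroup E] [InnerProductSpace ℝ E] [FiniteDimensional ℝ E]
    [NormedAddCommGroup V] [InnerProductSpace ℝ V] [FiniteDimensional ℝ V]
    (hE : Module.finrank ℝ E = 1)
    (ρU : H →* (U ≃ₗᵢ[ℝ] U)) (ρE : H →* (E ≃ₗᵢ[ℝ] E)) (ρV : H →* (V ≃ₗᵢ[ℝ] V)) :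
    ∃ φ : SphereBundle U E V ≃ₜ MorSum U E V,
      (∀ (p : SphereBundle U E V) (u : U) (e : E),
        (φ p).1 ((WithLp.equiv 2 (U × E)).symm (u, e)) = p.1.1 u + p.1.2 e) ∧
      (∀ (h : H) (p q : SphereBundle U E V),
        (∀ u : U, q.1.1 u = ρV h (p.1.1 (ρU h⁻¹ u))) →
        (∀ e : E, q.1.2 e = ρV h (p.1.2 (ρE h⁻¹ e))) →
        ∀ (u : U) (e : E),
          (φ q).1 ((WithLp.equiv 2 (U × E)).symm (u, e)) =
            ρV h ((φ p).1 ((WithLp.equiv 2 (U × E)).symm (ρU h⁻¹ u, ρE h⁻¹ e)))) :=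
  stmt1_general H U E V ρU ρE ρV
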